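/- Let 1 < α < 2 and β > 0, let φ be an analytic self-map of the open unit disk D, and let g be analytic on D. Then the operator C_φU_g, defined by (C_φU_g f)(z) = ∫₀^{φ(z)} f(ξ) g'(ξ) dξ, is bounded from Z^α to Z^β if and only if (g'∘φ)·φ'' + (g''∘φ)·(φ')² ∈ H_{v_β}^∞ and sup_{z∈D} (1−|z|²)^β |g'(φ(z))(φ'(z))²| / (1−|φ(z)|²)^{α−1} < ∞. -/

import Mathlib

noncomputable section

/-- The open unit disk in the complex plane. -/
def uD : Set ℂ := Metric.ball 0 1

/-- The Zygmund-type quantity `(1-|z|^2)^a * |f''(z)|`. -/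
def zygS (a : ℝ) (f : ℂ → ℂ) (z : ℂ) : ℝ := (1 - ‖z‖ ^ 2) ^ a * ‖deriv (deriv f) z‖

/-- Membership in the Zygmund-type space `Z^a`. -/
def memZ (a : ℝ) (f : ℂ → ℂ) : Prop :=
  AnalyticOn ℂ f uD ∧ ∃ M : ℝ, ∀ z ∈ uD, zygS a f z ≤ M

/-- The Zygmund-type norm `‖f‖_{Z^a} = |f 0| + |f' 0| + sup_{z ∈ D} (1-|z|^2)^a |f''(z)|`. -/
def zNorm (a : ℝ) (f : ℂ → ℂ) : ℝ := ‖f 0‖ + ‖deriv f 0‖ + sSup (zygS a f '' uD)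

/-- Membership in the weighted space `H^∞_{v_b}` (for `u` analytic on `uD`). -/
def memHv (b : ℝ) (u : ℂ → ℂ) : Prop :=
  ∃ M : ℝ, ∀ z ∈ uD, (1 - ‖z‖ ^ 2) ^ b * ‖u z‖ ≤ M

/-- `T` is a bounded operator from `Z^a` to `Z^b`. -/
def boundedOp (a b : ℝ) (T : (ℂ → ℂ) → ℂ → ℂ) : Prop :=
  (∀ f, memZ a f → memZ b (T f)) ∧
    ∃ C > 0, ∀ f, memZ a f → zNorm b (T f) ≤ C * zNorm a f

/-- `(C_φ U_g f)(z) = ∫₀^{φ(z)} f(ξ) g'(ξ) dξ`, parametrized along the segment from `0` to `φ z`. -/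
def CphiUg (g φ : ℂ → ℂ) (f : ℂ → ℂ) : ℂ → ℂ :=
  fun z => ∫ t in (0:ℝ)..1, φ z * (f ((t : ℂ) * φ z) * deriv g ((t : ℂ) * φ z))

/-!
By Morera's theorem `f g'` has a primitive `F` on the disk and `C_φU_g f = F ∘ φ - F 0`, so
`(C_φU_g f)'' = (f' ∘ φ) · (g' ∘ φ) φ'² + (f ∘ φ) · ((g' ∘ φ) φ'' + (g'' ∘ φ) φ'²)`.

For `1 < α < 2` every `f ∈ Z^α` is bounded by `C ‖f‖` and satisfies
`|f'(w)| ≤ C ‖f‖ (1 - |w|²)^(1-α)` (integrate the growth of `f''` and then of `f'` along the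
radius), which gives sufficiency. Conversely, the images of `1` and `z` bound the two coefficients
in `H^∞_{v_β}`; where `|φ z| ≥ 1/2`, the test function `f_a(z) = (1 - |a|²)² / (1 - ā z)^α` with
`a = φ z`, bounded in `Z^α` uniformly in `a`, with `|f_a(a)| ≤ 1` and
`|f_a'(a)| = α |a| (1 - |a|²)^(1-α)`, isolates the weighted bound on `(g' ∘ φ) φ'²`.
-/

open Complex ComplexConjugate Metric Set Filter Topology

lemma mem_uD {z : ℂ} : z ∈ uD ↔ ‖z‖ < 1 := mem_ball_zero_iff

lemma zero_mem_uD : (0 : ℂ) ∈ uD := mem_uD.2 (by simp)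

lemma isOpen_uD : IsOpen uD := isOpen_ball

lemma one_sub_norm_sq_pos {z : ℂ} (hz : z ∈ uD) : 0 < 1 - ‖z‖ ^ 2 := by
  have := mem_uD.1 hz
  nlinarith [norm_nonneg z]

lemma ofReal_mul_mem_uD {w : ℂ} (hw : w ∈ uD) {t : ℝ} (ht : t ∈ Icc 0 1) :
    (t : ℂ) * w ∈ uD := by
  rw [mem_uD, norm_mul, norm_real, Real.norm_of_nonneg ht.1]
  nlinarith [mem_uD.1 hw, norm_nonneg w, ht.2]

lemma one_sub_rpow_le_one_sub_sq_rpow {r p : ℝ} (hr0 : 0 ≤ r) (hr1 : r ≤ 1) (hp : 0 ≤ p) :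
    (1 - r) ^ p ≤ (1 - r ^ 2) ^ p :=
  Real.rpow_le_rpow (by linarith) (by nlinarith) hp

lemma one_sub_sq_rpow_le {r p : ℝ} (hr0 : 0 ≤ r) (hr1 : r ≤ 1) (hp : 0 ≤ p) :
    (1 - r ^ 2) ^ p ≤ 2 ^ p * (1 - r) ^ p := by
  rw [show 1 - r ^ 2 = (1 + r) * (1 - r) by ring, Real.mul_rpow (by linarith) (by linarith)]
  gcongr
  linarith

lemma one_sub_rpow_neg_le {r p : ℝ} (hr0 : 0 ≤ r) (hr1 : r < 1) (hp : 0 ≤ p) :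
    (1 - r) ^ (-p) ≤ 2 ^ p * (1 - r ^ 2) ^ (-p) := by
  have h1 : 0 < (1 - r) ^ p := Real.rpow_pos_of_pos (by linarith) p
  have h2 : 0 < (1 - r ^ 2) ^ p := Real.rpow_pos_of_pos (by nlinarith) p
  rw [Real.rpow_neg (by linarith), Real.rpow_neg (by nlinarith), ← div_eq_mul_inv,
    le_div_iff₀ h2, inv_mul_eq_div, div_le_iff₀ h1]
  exact one_sub_sq_rpow_le hr0 hr1.le hp

lemma norm_sub_le_of_norm_deriv_le {h : ℂ → ℂ} {K p : ℝ} (hp : p ≠ 1)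
    (hh : DifferentiableOn ℂ h uD) (hbound : ∀ u ∈ uD, ‖deriv h u‖ ≤ K * (1 - ‖u‖) ^ (-p))
    {w : ℂ} (hw : w ∈ uD) :
    ‖h w - h 0‖ ≤ K * ((1 - ‖w‖) ^ (1 - p) - 1) / (p - 1) := by
  -- Compare `t ↦ h (t w) - h 0` on `[0, 1]` with a real primitive of the radial majorant.
  set r := ‖w‖
  have hr1 : r < 1 := mem_uD.1 hw
  have hpos : ∀ t ∈ Icc (0 : ℝ) 1, 0 < 1 - t * r := fun t ht => by
    nlinarith [norm_nonneg w, ht.2]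
  have hderiv : ∀ t ∈ Icc (0 : ℝ) 1,
      HasDerivAt (fun s : ℝ => h (s * w) - h 0) (w * deriv h (t * w)) t := fun t ht => by
    have hd := ((hh _ (ofReal_mul_mem_uD hw ht)).differentiableAt
      (isOpen_uD.mem_nhds (ofReal_mul_mem_uD hw ht))).hasDerivAt
    simpa [mul_comm] using ((hd.comp (t : ℂ) (hasDerivAt_mul_const w)).comp_ofReal).sub_const (h 0)
  have hB : ∀ t ∈ Icc (0 : ℝ) 1, HasDerivAt (fun s : ℝ => K * ((1 - s * r) ^ (1 - p) - 1) / (p - 1))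
      (K * r * (1 - t * r) ^ (-p)) t := fun t ht => by
    have h1 := (((hasDerivAt_mul_const r).const_sub 1).rpow_const
      (p := 1 - p) (Or.inl (hpos t ht).ne')).sub_const 1
    refine ((h1.const_mul K).div_const (p - 1)).congr_deriv ?_
    rw [show 1 - p - 1 = -p by ring]
    field_simp [sub_ne_zero.2 hp]
    ring
  have := image_norm_le_of_norm_deriv_right_le_deriv_boundary' (a := 0) (b := 1)
    (f := fun s : ℝ => h (s * w) - h 0)
    (fun t ht => (hderiv t ht).continuousAt.continuousWithinAt)
    (fun t ht => (hderiv t (Ico_subset_Icc_self ht)).hasDerivWithinAt)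
    (B := fun s : ℝ => K * ((1 - s * r) ^ (1 - p) - 1) / (p - 1)) (by simp)
    (fun t ht => (hB t ht).continuousAt.continuousWithinAt)
    (fun t ht => (hB t (Ico_subset_Icc_self ht)).hasDerivWithinAt)
    (fun t ht => by
      have ht' := Ico_subset_Icc_self ht
      have hb := hbound _ (ofReal_mul_mem_uD hw ht')
      rw [norm_mul, norm_real, Real.norm_of_nonneg ht'.1] at hb
      rw [norm_mul, mul_comm K, mul_assoc]
      exact mul_le_mul_of_nonneg_left hb (norm_nonneg w))
    (right_mem_Icc.2 zero_le_one)
  simpa using this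

lemma zygS_nonneg (a : ℝ) (f : ℂ → ℂ) {z : ℂ} (hz : z ∈ uD) : 0 ≤ zygS a f z :=
  mul_nonneg (Real.rpow_nonneg (one_sub_norm_sq_pos hz).le a) (norm_nonneg _)

lemma norm_deriv_deriv_le_of_zygS_le {a S : ℝ} (ha : 0 ≤ a) {f : ℂ → ℂ}
    (hS : ∀ z ∈ uD, zygS a f z ≤ S) {u : ℂ} (hu : u ∈ uD) :
    ‖deriv (deriv f) u‖ ≤ S * (1 - ‖u‖) ^ (-a) := by
  have hu1 : 0 < 1 - ‖u‖ := sub_pos.2 (mem_uD.1 hu)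
  rw [Real.rpow_neg hu1.le, ← div_eq_mul_inv, le_div_iff₀ (Real.rpow_pos_of_pos hu1 a), mul_comm]
  calc (1 - ‖u‖) ^ a * ‖deriv (deriv f) u‖ ≤ zygS a f u :=
        mul_le_mul_of_nonneg_right
          (one_sub_rpow_le_one_sub_sq_rpow (norm_nonneg u) (mem_uD.1 hu).le ha) (norm_nonneg _)
    _ ≤ S := hS u hu

lemma norm_deriv_le_of_zygS_le {a S : ℝ} (ha : 1 < a) {f : ℂ → ℂ} (hf : AnalyticOnNhd ℂ f uD)
    (hS : ∀ z ∈ uD, zygS a f z ≤ S) {u : ℂ} (hu : u ∈ uD) :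
    ‖deriv f u‖ ≤ (‖deriv f 0‖ + S / (a - 1)) * (1 - ‖u‖) ^ (1 - a) := by
  have hS0 : 0 ≤ S := (zygS_nonneg a f zero_mem_uD).trans (hS 0 zero_mem_uD)
  have hu1 : 0 < 1 - ‖u‖ := sub_pos.2 (mem_uD.1 hu)
  have hgrow : 1 ≤ (1 - ‖u‖) ^ (1 - a) :=
    Real.one_le_rpow_of_pos_of_le_one_of_nonpos hu1 (by linarith [norm_nonneg u]) (by linarith)
  have hdiff := norm_sub_le_of_norm_deriv_le ha.ne' hf.deriv.differentiableOn
    (fun v hv => norm_deriv_deriv_le_of_zygS_le (by linarith) hS hv) hu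
  have hdiff' : S * ((1 - ‖u‖) ^ (1 - a) - 1) / (a - 1) ≤ S / (a - 1) * (1 - ‖u‖) ^ (1 - a) := by
    rw [mul_div_right_comm]
    exact mul_le_mul_of_nonneg_left (by linarith) (div_nonneg hS0 (by linarith))
  calc ‖deriv f u‖ ≤ ‖deriv f 0‖ + ‖deriv f u - deriv f 0‖ := norm_le_norm_add_norm_sub' _ _
    _ ≤ ‖deriv f 0‖ * (1 - ‖u‖) ^ (1 - a) + S / (a - 1) * (1 - ‖u‖) ^ (1 - a) := by
        gcongr
        · exact le_mul_of_one_le_right (norm_nonneg _) hgrow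
        · exact hdiff.trans hdiff'
    _ = (‖deriv f 0‖ + S / (a - 1)) * (1 - ‖u‖) ^ (1 - a) := by ring

lemma norm_le_of_zygS_le {a S : ℝ} (ha1 : 1 < a) (ha2 : a < 2) {f : ℂ → ℂ}
    (hf : AnalyticOnNhd ℂ f uD) (hS : ∀ z ∈ uD, zygS a f z ≤ S) {u : ℂ} (hu : u ∈ uD) :
    ‖f u‖ ≤ ‖f 0‖ + (‖deriv f 0‖ + S / (a - 1)) / (2 - a) := by
  have hS0 : 0 ≤ S := (zygS_nonneg a f zero_mem_uD).trans (hS 0 zero_mem_uD)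
  have hD : 0 ≤ ‖deriv f 0‖ + S / (a - 1) :=
    add_nonneg (norm_nonneg _) (div_nonneg hS0 (by linarith))
  have hdiff := norm_sub_le_of_norm_deriv_le (K := ‖deriv f 0‖ + S / (a - 1)) (p := a - 1)
    (by linarith) hf.differentiableOn
    (fun v hv => (norm_deriv_le_of_zygS_le ha1 hf hS hv).trans_eq (by rw [neg_sub])) hu
  have hpow : 0 ≤ (1 - ‖u‖) ^ (1 - (a - 1)) :=
    Real.rpow_nonneg (sub_pos.2 (mem_uD.1 hu)).le _
  rw [show a - 1 - 1 = -(2 - a) by ring, div_neg, ← neg_div, ← mul_neg] at hdiff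
  calc ‖f u‖ ≤ ‖f 0‖ + ‖f u - f 0‖ := norm_le_norm_add_norm_sub' _ _
    _ ≤ ‖f 0‖ + (‖deriv f 0‖ + S / (a - 1)) / (2 - a) := by
        gcongr
        exact hdiff.trans (div_le_div_of_nonneg_right
          (mul_le_of_le_one_right hD (by linarith)) (by linarith))

lemma memZ.analyticOnNhd {a : ℝ} {f : ℂ → ℂ} (hf : memZ a f) : AnalyticOnNhd ℂ f uD :=
  isOpen_uD.analyticOn_iff_analyticOnNhd.1 hf.1

lemma sSup_zygS_nonneg (a : ℝ) (f : ℂ → ℂ) : 0 ≤ sSup (zygS a f '' uD) :=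
  Real.sSup_nonneg (by rintro _ ⟨z, hz, rfl⟩; exact zygS_nonneg a f hz)

lemma zygS_le_sSup {a : ℝ} {f : ℂ → ℂ} (hf : memZ a f) {z : ℂ} (hz : z ∈ uD) :
    zygS a f z ≤ sSup (zygS a f '' uD) := by
  obtain ⟨-, M, hM⟩ := hf
  exact le_csSup ⟨M, by rintro _ ⟨w, hw, rfl⟩; exact hM w hw⟩ (mem_image_of_mem _ hz)

lemma norm_apply_zero_le_zNorm (a : ℝ) (f : ℂ → ℂ) : ‖f 0‖ ≤ zNorm a f := by
  unfold zNorm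
  linarith [norm_nonneg (deriv f 0), sSup_zygS_nonneg a f]

lemma norm_deriv_zero_le_zNorm (a : ℝ) (f : ℂ → ℂ) : ‖deriv f 0‖ ≤ zNorm a f := by
  unfold zNorm
  linarith [norm_nonneg (f 0), sSup_zygS_nonneg a f]

lemma zNorm_nonneg (a : ℝ) (f : ℂ → ℂ) : 0 ≤ zNorm a f :=
  (norm_nonneg _).trans (norm_apply_zero_le_zNorm a f)

lemma zygS_le_zNorm {a : ℝ} {f : ℂ → ℂ} (hf : memZ a f) {z : ℂ} (hz : z ∈ uD) :
    zygS a f z ≤ zNorm a f := by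
  unfold zNorm
  linarith [zygS_le_sSup hf hz, norm_nonneg (f 0), norm_nonneg (deriv f 0)]

lemma norm_deriv_add_div_le_zNorm {a : ℝ} (ha : 1 < a) (f : ℂ → ℂ) :
    ‖deriv f 0‖ + sSup (zygS a f '' uD) / (a - 1) ≤ a / (a - 1) * zNorm a f := by
  have ha' : 0 < a - 1 := by linarith
  have h : sSup (zygS a f '' uD) ≤ zNorm a f := by
    unfold zNorm
    linarith [norm_nonneg (f 0), norm_nonneg (deriv f 0)]
  have := div_le_div_of_nonneg_right h ha'.le
  have := norm_deriv_zero_le_zNorm a f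
  rw [show a / (a - 1) * zNorm a f = zNorm a f + zNorm a f / (a - 1) by field_simp; ring]
  linarith

lemma norm_deriv_le_zNorm {a : ℝ} (ha : 1 < a) {f : ℂ → ℂ} (hf : memZ a f) {u : ℂ}
    (hu : u ∈ uD) :
    ‖deriv f u‖ ≤ 2 ^ (a - 1) * (a / (a - 1)) * zNorm a f * (1 - ‖u‖ ^ 2) ^ (1 - a) := by
  have hweight := one_sub_rpow_neg_le (norm_nonneg u) (mem_uD.1 hu) (p := a - 1) (by linarith)
  rw [neg_sub] at hweight
  calc ‖deriv f u‖
      ≤ (‖deriv f 0‖ + sSup (zygS a f '' uD) / (a - 1)) * (1 - ‖u‖) ^ (1 - a) :=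
        norm_deriv_le_of_zygS_le ha hf.analyticOnNhd
          (fun z hz => zygS_le_sSup hf hz) hu
    _ ≤ a / (a - 1) * zNorm a f * (2 ^ (a - 1) * (1 - ‖u‖ ^ 2) ^ (1 - a)) :=
        mul_le_mul (norm_deriv_add_div_le_zNorm ha f) hweight
          (Real.rpow_nonneg (sub_pos.2 (mem_uD.1 hu)).le _)
          (mul_nonneg (div_nonneg (by linarith) (by linarith)) (zNorm_nonneg a f))
    _ = _ := by ring

lemma norm_le_zNorm {a : ℝ} (ha1 : 1 < a) (ha2 : a < 2) {f : ℂ → ℂ} (hf : memZ a f) {u : ℂ}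
    (hu : u ∈ uD) : ‖f u‖ ≤ (1 + a / ((a - 1) * (2 - a))) * zNorm a f :=
  calc ‖f u‖ ≤ ‖f 0‖ + (‖deriv f 0‖ + sSup (zygS a f '' uD) / (a - 1)) / (2 - a) :=
        norm_le_of_zygS_le ha1 ha2 hf.analyticOnNhd
          (fun z hz => zygS_le_sSup hf hz) hu
    _ ≤ zNorm a f + a / (a - 1) * zNorm a f / (2 - a) :=
        add_le_add (norm_apply_zero_le_zNorm a f)
          (div_le_div_of_nonneg_right (norm_deriv_add_div_le_zNorm ha1 f) (by linarith))
    _ = (1 + a / ((a - 1) * (2 - a))) * zNorm a f := by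
        rw [add_mul, one_mul, div_mul_eq_mul_div, div_mul_eq_mul_div, div_div]

def coeffDeriv (g φ : ℂ → ℂ) (z : ℂ) : ℂ := deriv g (φ z) * (deriv φ z) ^ 2

def coeffVal (g φ : ℂ → ℂ) (z : ℂ) : ℂ :=
  deriv g (φ z) * deriv (deriv φ) z + deriv (deriv g) (φ z) * (deriv φ z) ^ 2

lemma integral_ray_eq_sub {F G : ℂ → ℂ} (hF : ∀ z ∈ uD, HasDerivAt F (G z) z)
    (hG : ContinuousOn G uD) {w : ℂ} (hw : w ∈ uD) :
    ∫ t in (0 : ℝ)..1, w * G (t * w) = F w - F 0 := by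
  have hderiv : ∀ t ∈ uIcc (0 : ℝ) 1, HasDerivAt (fun s : ℝ => F (s * w)) (w * G (t * w)) t := by
    intro t ht
    rw [uIcc_of_le zero_le_one] at ht
    simpa [mul_comm] using
      ((hF _ (ofReal_mul_mem_uD hw ht)).comp (t : ℂ) (hasDerivAt_mul_const w)).comp_ofReal
  have hcont : ContinuousOn (fun t : ℝ => w * G (t * w)) (uIcc 0 1) := by
    rw [uIcc_of_le zero_le_one]
    exact continuousOn_const.mul
      (hG.comp (by fun_prop) fun t ht => ofReal_mul_mem_uD hw ht)
  simpa using intervalIntegral.integral_eq_sub_of_hasDerivAt hderiv hcont.intervalIntegrable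

lemma exists_CphiUg_eq_sub {φ g f : ℂ → ℂ} (hφm : MapsTo φ uD uD)
    (hg : AnalyticOnNhd ℂ g uD) (hf : AnalyticOnNhd ℂ f uD) :
    ∃ F : ℂ → ℂ, (∀ z ∈ uD, HasDerivAt F (f z * deriv g z) z) ∧
      ∀ z ∈ uD, CphiUg g φ f z = F (φ z) - F 0 := by
  have hG : AnalyticOnNhd ℂ (fun z => f z * deriv g z) uD := hf.mul hg.deriv
  obtain ⟨F, hF⟩ := hG.differentiableOn.isExactOn_ball (c := 0) (r := 1)
  exact ⟨F, hF, fun z hz => integral_ray_eq_sub hF hG.continuousOn (hφm hz)⟩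

lemma hasDerivAt_CphiUg {φ g f : ℂ → ℂ} (hφ : AnalyticOnNhd ℂ φ uD) (hφm : MapsTo φ uD uD)
    (hg : AnalyticOnNhd ℂ g uD) (hf : AnalyticOnNhd ℂ f uD) {z : ℂ} (hz : z ∈ uD) :
    HasDerivAt (CphiUg g φ f) (f (φ z) * deriv g (φ z) * deriv φ z) z := by
  obtain ⟨F, hF, hT⟩ := exists_CphiUg_eq_sub hφm hg hf
  have hcomp := ((hF _ (hφm hz)).comp z (hφ z hz).differentiableAt.hasDerivAt).sub_const (F 0)
  exact hcomp.congr_of_eventuallyEq (eventually_of_mem (isOpen_uD.mem_nhds hz) hT)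

lemma analyticOnNhd_CphiUg {φ g f : ℂ → ℂ} (hφ : AnalyticOnNhd ℂ φ uD)
    (hφm : MapsTo φ uD uD) (hg : AnalyticOnNhd ℂ g uD) (hf : AnalyticOnNhd ℂ f uD) :
    AnalyticOnNhd ℂ (CphiUg g φ f) uD :=
  DifferentiableOn.analyticOnNhd (fun _ hz =>
    (hasDerivAt_CphiUg hφ hφm hg hf hz).differentiableAt.differentiableWithinAt) isOpen_uD

lemma deriv_deriv_CphiUg {φ g f : ℂ → ℂ} (hφ : AnalyticOnNhd ℂ φ uD) (hφm : MapsTo φ uD uD)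
    (hg : AnalyticOnNhd ℂ g uD) (hf : AnalyticOnNhd ℂ f uD) {z : ℂ} (hz : z ∈ uD) :
    deriv (deriv (CphiUg g φ f)) z =
      deriv f (φ z) * coeffDeriv g φ z + f (φ z) * coeffVal g φ z := by
  have hderiv : deriv (CphiUg g φ f) =ᶠ[𝓝 z] fun x => f (φ x) * deriv g (φ x) * deriv φ x :=
    eventually_of_mem (isOpen_uD.mem_nhds hz) fun x hx => (hasDerivAt_CphiUg hφ hφm hg hf hx).deriv
  have hφz := (hφ z hz).differentiableAt.hasDerivAt
  have hfg := ((hf _ (hφm hz)).differentiableAt.hasDerivAt.comp z hφz).mul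
    ((hg.deriv _ (hφm hz)).differentiableAt.hasDerivAt.comp z hφz)
  rw [hderiv.deriv_eq]
  refine (hfg.mul (hφ.deriv z hz).differentiableAt.hasDerivAt).deriv.trans ?_
  simp only [coeffDeriv, coeffVal, Function.comp, Pi.mul_apply]
  ring

lemma zygS_CphiUg {φ g f : ℂ → ℂ} (hφ : AnalyticOnNhd ℂ φ uD) (hφm : MapsTo φ uD uD)
    (hg : AnalyticOnNhd ℂ g uD) (hf : AnalyticOnNhd ℂ f uD) (b : ℝ) {z : ℂ} (hz : z ∈ uD) :
    zygS b (CphiUg g φ f) z =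
      (1 - ‖z‖ ^ 2) ^ b * ‖deriv f (φ z) * coeffDeriv g φ z + f (φ z) * coeffVal g φ z‖ := by
  rw [zygS, deriv_deriv_CphiUg hφ hφm hg hf hz]

lemma one_sub_norm_mul_le_re (c z : ℂ) : 1 - ‖c‖ * ‖z‖ ≤ (1 - c * z).re := by
  have := re_le_norm (c * z)
  rw [norm_mul] at this
  simp only [sub_re, one_re]
  linarith

lemma one_sub_norm_mul_le_norm (c z : ℂ) : 1 - ‖c‖ * ‖z‖ ≤ ‖1 - c * z‖ :=
  (one_sub_norm_mul_le_re c z).trans (re_le_norm _)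

lemma hasDerivAt_one_sub_mul_cpow {c z : ℂ} (s : ℂ) (h : 0 < (1 - c * z).re) :
    HasDerivAt (fun w => (1 - c * w) ^ s) (-c * s * (1 - c * z) ^ (s - 1)) z := by
  have hlin : HasDerivAt (fun w => 1 - c * w) (-c) z := by
    simpa using ((hasDerivAt_id z).const_mul c).const_sub 1
  exact (hlin.cpow_const (mem_slitPlane_iff.2 (Or.inl h))).congr_deriv (by ring)

lemma re_one_sub_conj_mul_pos {a z : ℂ} (ha : a ∈ uD) (hz : z ∈ uD) :
    0 < (1 - conj a * z).re := by
  have := one_sub_norm_mul_le_re (conj a) z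
  rw [norm_conj] at this
  nlinarith [mem_uD.1 ha, mem_uD.1 hz, norm_nonneg a, norm_nonneg z]

def testFn (α : ℝ) (a : ℂ) (z : ℂ) : ℂ :=
  ((1 - ‖a‖ ^ 2) ^ 2 : ℝ) * (1 - conj a * z) ^ ((-α : ℝ) : ℂ)

lemma hasDerivAt_testFn (α : ℝ) {a z : ℂ} (ha : a ∈ uD) (hz : z ∈ uD) :
    HasDerivAt (testFn α a)
      (((1 - ‖a‖ ^ 2) ^ 2 * α : ℝ) * conj a * (1 - conj a * z) ^ ((-α - 1 : ℝ) : ℂ)) z := by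
  refine ((hasDerivAt_one_sub_mul_cpow _ (re_one_sub_conj_mul_pos ha hz)).const_mul
    (((1 - ‖a‖ ^ 2) ^ 2 : ℝ) : ℂ)).congr_deriv ?_
  rw [show ((-α : ℝ) : ℂ) - 1 = ((-α - 1 : ℝ) : ℂ) by push_cast; ring]
  push_cast
  ring

lemma deriv_testFn (α : ℝ) {a z : ℂ} (ha : a ∈ uD) (hz : z ∈ uD) :
    deriv (testFn α a) z =
      ((1 - ‖a‖ ^ 2) ^ 2 * α : ℝ) * conj a * (1 - conj a * z) ^ ((-α - 1 : ℝ) : ℂ) :=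
  (hasDerivAt_testFn α ha hz).deriv

lemma deriv_deriv_testFn (α : ℝ) {a z : ℂ} (ha : a ∈ uD) (hz : z ∈ uD) :
    deriv (deriv (testFn α a)) z = ((1 - ‖a‖ ^ 2) ^ 2 * (α * (α + 1)) : ℝ) * conj a ^ 2 *
      (1 - conj a * z) ^ ((-α - 2 : ℝ) : ℂ) := by
  have hderiv : deriv (testFn α a) =ᶠ[𝓝 z] fun w =>
      ((1 - ‖a‖ ^ 2) ^ 2 * α : ℝ) * conj a * (1 - conj a * w) ^ ((-α - 1 : ℝ) : ℂ) :=
    eventually_of_mem (isOpen_uD.mem_nhds hz) fun w hw => deriv_testFn α ha hw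
  rw [hderiv.deriv_eq, ((hasDerivAt_one_sub_mul_cpow _ (re_one_sub_conj_mul_pos ha hz)).const_mul
    ((((1 - ‖a‖ ^ 2) ^ 2 * α : ℝ) : ℂ) * conj a)).deriv,
    show ((-α - 1 : ℝ) : ℂ) - 1 = ((-α - 2 : ℝ) : ℂ) by push_cast; ring]
  push_cast
  ring

lemma analyticOnNhd_testFn (α : ℝ) {a : ℂ} (ha : a ∈ uD) : AnalyticOnNhd ℂ (testFn α a) uD :=
  DifferentiableOn.analyticOnNhd (fun _ hz =>
    (hasDerivAt_testFn α ha hz).differentiableAt.differentiableWithinAt) isOpen_uD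

lemma zygS_testFn_le {α : ℝ} (hα : 0 ≤ α) {a z : ℂ} (ha : a ∈ uD) (hz : z ∈ uD) :
    zygS α (testFn α a) z ≤ 2 ^ α * 4 * (α * (α + 1)) := by
  set B := ‖1 - conj a * z‖
  have hB : 0 < B := (re_one_sub_conj_mul_pos ha hz).trans_le (re_le_norm _)
  have hBa : 1 - ‖a‖ * ‖z‖ ≤ B := by simpa using one_sub_norm_mul_le_norm (conj a) z
  have ha1 := mem_uD.1 ha
  have hz1 := mem_uD.1 hz
  have hpa := one_sub_norm_sq_pos ha
  have hzB : (1 - ‖z‖ ^ 2) ^ α ≤ 2 ^ α * B ^ α := by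
    rw [← Real.mul_rpow zero_le_two hB.le]
    exact Real.rpow_le_rpow (one_sub_norm_sq_pos hz).le
      (by nlinarith [norm_nonneg a, norm_nonneg z]) hα
  have haB : (1 - ‖a‖ ^ 2) ^ 2 ≤ 4 * B ^ 2 := by
    have : 1 - ‖a‖ ^ 2 ≤ 2 * B := by nlinarith [norm_nonneg a, norm_nonneg z]
    nlinarith [pow_le_pow_left₀ hpa.le this 2]
  have hcancel : B ^ α * B ^ 2 * B ^ (-α - 2) = 1 := by
    rw [← Real.rpow_natCast, ← Real.rpow_add hB, ← Real.rpow_add hB]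
    norm_num
  rw [zygS, deriv_deriv_testFn α ha hz, norm_mul, norm_mul, norm_real,
    Real.norm_of_nonneg (by positivity), norm_pow, norm_conj, norm_cpow_real]
  calc (1 - ‖z‖ ^ 2) ^ α * ((1 - ‖a‖ ^ 2) ^ 2 * (α * (α + 1)) * ‖a‖ ^ 2 * B ^ (-α - 2))
      ≤ 2 ^ α * B ^ α * (4 * B ^ 2 * (α * (α + 1)) * 1 * B ^ (-α - 2)) := by
        gcongr
        nlinarith [norm_nonneg a]
    _ = 2 ^ α * 4 * (α * (α + 1)) * (B ^ α * B ^ 2 * B ^ (-α - 2)) := by ring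
    _ = 2 ^ α * 4 * (α * (α + 1)) := by rw [hcancel, mul_one]

lemma memZ_testFn {α : ℝ} (hα : 0 ≤ α) {a : ℂ} (ha : a ∈ uD) : memZ α (testFn α a) :=
  ⟨(analyticOnNhd_testFn α ha).analyticOn, _, fun _ hz => zygS_testFn_le hα ha hz⟩

lemma zNorm_testFn_le {α : ℝ} (hα : 0 ≤ α) {a : ℂ} (ha : a ∈ uD) :
    zNorm α (testFn α a) ≤ 1 + α + 2 ^ α * 4 * (α * (α + 1)) := by
  have hpa := one_sub_norm_sq_pos ha
  have hsq : (1 - ‖a‖ ^ 2) ^ 2 ≤ 1 := by nlinarith [norm_nonneg a]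
  have h0 : ‖testFn α a 0‖ ≤ 1 := by
    rwa [testFn, mul_zero, sub_zero, one_cpow, mul_one, norm_real,
      Real.norm_of_nonneg (sq_nonneg _)]
  have h1 : ‖deriv (testFn α a) 0‖ ≤ α := by
    rw [deriv_testFn α ha zero_mem_uD]
    simp only [mul_zero, sub_zero, one_cpow, mul_one, norm_mul, norm_real, norm_conj,
      Real.norm_of_nonneg (mul_nonneg (sq_nonneg (1 - ‖a‖ ^ 2)) hα)]
    nlinarith [mem_uD.1 ha, norm_nonneg a, mul_le_mul hsq (mem_uD.1 ha).le (norm_nonneg a)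
      zero_le_one]
  have h2 : sSup (zygS α (testFn α a) '' uD) ≤ 2 ^ α * 4 * (α * (α + 1)) :=
    csSup_le (nonempty_of_mem (mem_image_of_mem _ zero_mem_uD))
      (by rintro _ ⟨z, hz, rfl⟩; exact zygS_testFn_le hα ha hz)
  unfold zNorm
  linarith

lemma one_sub_conj_mul_self (a : ℂ) : 1 - conj a * a = ((1 - ‖a‖ ^ 2 : ℝ) : ℂ) := by
  rw [conj_mul']
  push_cast
  ring

lemma norm_testFn_self_le {α : ℝ} (hα : α ≤ 2) {a : ℂ} (ha : a ∈ uD) : ‖testFn α a a‖ ≤ 1 := by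
  have hpa := one_sub_norm_sq_pos ha
  rw [testFn, one_sub_conj_mul_self, norm_mul, norm_real, norm_cpow_real, norm_real,
    Real.norm_of_nonneg (sq_nonneg _), Real.norm_of_nonneg hpa.le, ← Real.rpow_natCast,
    ← Real.rpow_add hpa]
  exact Real.rpow_le_one hpa.le (by nlinarith [norm_nonneg a]) (by push_cast; linarith)

lemma norm_deriv_testFn_self {α : ℝ} (hα : 0 ≤ α) {a : ℂ} (ha : a ∈ uD) :
    ‖deriv (testFn α a) a‖ = α * ‖a‖ * (1 - ‖a‖ ^ 2) ^ (1 - α) := by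
  have hpa := one_sub_norm_sq_pos ha
  rw [deriv_testFn α ha ha, one_sub_conj_mul_self, norm_mul, norm_mul, norm_real, norm_conj,
    norm_cpow_real, norm_real, Real.norm_of_nonneg (mul_nonneg (sq_nonneg _) hα),
    Real.norm_of_nonneg hpa.le, show 1 - α = 2 + (-α - 1) by ring, Real.rpow_add hpa,
    Real.rpow_two]
  ring

lemma norm_deriv_mul_weighted_coeffDeriv_le {φ g f : ℂ → ℂ} (hφ : AnalyticOnNhd ℂ φ uD)
    (hφm : MapsTo φ uD uD) (hg : AnalyticOnNhd ℂ g uD) (hf : AnalyticOnNhd ℂ f uD)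
    {b K M : ℝ} {z : ℂ} (hz : z ∈ uD) (hK : zygS b (CphiUg g φ f) z ≤ K)
    (hM : (1 - ‖z‖ ^ 2) ^ b * ‖coeffVal g φ z‖ ≤ M) (hf1 : ‖f (φ z)‖ ≤ 1) :
    ‖deriv f (φ z)‖ * ((1 - ‖z‖ ^ 2) ^ b * ‖coeffDeriv g φ z‖) ≤ K + M := by
  rw [zygS_CphiUg hφ hφm hg hf b hz] at hK
  have hρ : 0 ≤ (1 - ‖z‖ ^ 2) ^ b := Real.rpow_nonneg (one_sub_norm_sq_pos hz).le b
  set T := deriv f (φ z) * coeffDeriv g φ z + f (φ z) * coeffVal g φ z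
  have htri : ‖deriv f (φ z) * coeffDeriv g φ z‖ ≤ ‖T‖ + ‖coeffVal g φ z‖ :=
    calc ‖deriv f (φ z) * coeffDeriv g φ z‖ = ‖T - f (φ z) * coeffVal g φ z‖ := by
          rw [add_sub_cancel_right]
      _ ≤ ‖T‖ + ‖f (φ z) * coeffVal g φ z‖ := norm_sub_le _ _
      _ ≤ ‖T‖ + ‖coeffVal g φ z‖ := by
          rw [norm_mul]
          gcongr
          exact mul_le_of_le_one_left (norm_nonneg _) hf1
  calc ‖deriv f (φ z)‖ * ((1 - ‖z‖ ^ 2) ^ b * ‖coeffDeriv g φ z‖)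
      = (1 - ‖z‖ ^ 2) ^ b * ‖deriv f (φ z) * coeffDeriv g φ z‖ := by rw [norm_mul]; ring
    _ ≤ (1 - ‖z‖ ^ 2) ^ b * (‖T‖ + ‖coeffVal g φ z‖) := mul_le_mul_of_nonneg_left htri hρ
    _ ≤ K + M := by rw [mul_add]; exact add_le_add hK hM

lemma memZ_const (a : ℝ) (c : ℂ) : memZ a fun _ => c :=
  ⟨analyticOnNhd_const.analyticOn, 0, fun z _ => by simp [zygS]⟩

lemma memZ_id (a : ℝ) : memZ a id :=
  ⟨analyticOnNhd_id.analyticOn, 0, fun z _ => by simp [zygS]⟩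

lemma exists_weighted_norm_coeffVal_le {a b : ℝ} {φ g : ℂ → ℂ} (hφ : AnalyticOnNhd ℂ φ uD)
    (hφm : MapsTo φ uD uD) (hg : AnalyticOnNhd ℂ g uD)
    (hT : ∀ f, memZ a f → memZ b (CphiUg g φ f)) :
    ∃ M, ∀ z ∈ uD, (1 - ‖z‖ ^ 2) ^ b * ‖coeffVal g φ z‖ ≤ M := by
  obtain ⟨-, M, hM⟩ := hT _ (memZ_const a 1)
  refine ⟨M, fun z hz => ?_⟩
  simpa [zygS_CphiUg hφ hφm hg analyticOnNhd_const b hz] using hM z hz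

lemma exists_weighted_norm_coeffDeriv_le {a b : ℝ} {φ g : ℂ → ℂ} (hφ : AnalyticOnNhd ℂ φ uD)
    (hφm : MapsTo φ uD uD) (hg : AnalyticOnNhd ℂ g uD)
    (hT : ∀ f, memZ a f → memZ b (CphiUg g φ f)) :
    ∃ M, ∀ z ∈ uD, (1 - ‖z‖ ^ 2) ^ b * ‖coeffDeriv g φ z‖ ≤ M := by
  obtain ⟨M₁, hM₁⟩ := exists_weighted_norm_coeffVal_le hφ hφm hg hT
  obtain ⟨-, M₂, hM₂⟩ := hT _ (memZ_id a)
  refine ⟨M₂ + M₁, fun z hz => ?_⟩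
  simpa using norm_deriv_mul_weighted_coeffDeriv_le hφ hφm hg analyticOnNhd_id hz (hM₂ z hz)
    (hM₁ z hz) (mem_uD.1 (hφm hz)).le

lemma exists_weighted_norm_coeffDeriv_div_le {α b : ℝ} (hα1 : 1 < α) (hα2 : α < 2) {φ g : ℂ → ℂ}
    (hφ : AnalyticOnNhd ℂ φ uD) (hφm : MapsTo φ uD uD) (hg : AnalyticOnNhd ℂ g uD)
    (hT : boundedOp α b (CphiUg g φ)) :
    ∃ M, ∀ z ∈ uD, (1 - ‖z‖ ^ 2) ^ b * ‖coeffDeriv g φ z‖ / (1 - ‖φ z‖ ^ 2) ^ (α - 1) ≤ M := by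
  obtain ⟨hmap, C, hC, hCle⟩ := hT
  obtain ⟨M₁, hM₁⟩ := exists_weighted_norm_coeffVal_le hφ hφm hg hmap
  obtain ⟨M₂, hM₂⟩ := exists_weighted_norm_coeffDeriv_le hφ hφm hg hmap
  have hα0 : 0 < α := by linarith
  set K := C * (1 + α + 2 ^ α * 4 * (α * (α + 1)))
  refine ⟨max (2 / α * (K + M₁)) (M₂ * (3 / 4) ^ (1 - α)), fun z hz => ?_⟩
  have hφz := hφm hz
  have hX : 0 ≤ (1 - ‖z‖ ^ 2) ^ b * ‖coeffDeriv g φ z‖ :=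
    mul_nonneg (Real.rpow_nonneg (one_sub_norm_sq_pos hz).le b) (norm_nonneg _)
  have hQ : 0 ≤ (1 - ‖φ z‖ ^ 2) ^ (1 - α) :=
    Real.rpow_nonneg (one_sub_norm_sq_pos hφz).le _
  rw [div_eq_mul_inv, ← Real.rpow_neg (one_sub_norm_sq_pos hφz).le, neg_sub]
  rcases le_or_gt (1 / 2) ‖φ z‖ with hlarge | hsmall
  · have hf := memZ_testFn hα0.le hφz
    have hK : zygS b (CphiUg g φ (testFn α (φ z))) z ≤ K :=
      calc _ ≤ zNorm b (CphiUg g φ (testFn α (φ z))) := zygS_le_zNorm (hmap _ hf) hz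
        _ ≤ C * zNorm α (testFn α (φ z)) := hCle _ hf
        _ ≤ K := mul_le_mul_of_nonneg_left (zNorm_testFn_le hα0.le hφz) hC.le
    have key := norm_deriv_mul_weighted_coeffDeriv_le hφ hφm hg (analyticOnNhd_testFn α hφz) hz hK
      (hM₁ z hz) (norm_testFn_self_le hα2.le hφz)
    rw [norm_deriv_testFn_self hα0.le hφz] at key
    refine le_max_of_le_left ?_
    calc (1 - ‖z‖ ^ 2) ^ b * ‖coeffDeriv g φ z‖ * (1 - ‖φ z‖ ^ 2) ^ (1 - α)
        = 2 / α * (α * (1 / 2) * (1 - ‖φ z‖ ^ 2) ^ (1 - α) *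
          ((1 - ‖z‖ ^ 2) ^ b * ‖coeffDeriv g φ z‖)) := by field_simp
      _ ≤ 2 / α * (K + M₁) := by
          gcongr
          exact le_trans (by gcongr) key
  · have hM₂0 : 0 ≤ M₂ := hX.trans (hM₂ z hz)
    refine le_max_of_le_right (mul_le_mul (hM₂ z hz) ?_ hQ hM₂0)
    exact Real.rpow_le_rpow_of_nonpos (by norm_num) (by nlinarith [norm_nonneg (φ z)])
      (by linarith)

lemma zygS_CphiUg_le {α b M₁ M₂ : ℝ} (hα1 : 1 < α) (hα2 : α < 2) {φ g f : ℂ → ℂ}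
    (hφ : AnalyticOnNhd ℂ φ uD) (hφm : MapsTo φ uD uD) (hg : AnalyticOnNhd ℂ g uD)
    (hM₁ : ∀ z ∈ uD, (1 - ‖z‖ ^ 2) ^ b * ‖coeffVal g φ z‖ ≤ M₁)
    (hM₂ : ∀ z ∈ uD, (1 - ‖z‖ ^ 2) ^ b * ‖coeffDeriv g φ z‖ / (1 - ‖φ z‖ ^ 2) ^ (α - 1) ≤ M₂)
    (hf : memZ α f) {z : ℂ} (hz : z ∈ uD) :
    zygS b (CphiUg g φ f) z ≤
      (2 ^ (α - 1) * (α / (α - 1)) * M₂ + (1 + α / ((α - 1) * (2 - α))) * M₁) * zNorm α f := by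
  have hφz := hφm hz
  have hpos := one_sub_norm_sq_pos hφz
  have hρ : 0 ≤ (1 - ‖z‖ ^ 2) ^ b := Real.rpow_nonneg (one_sub_norm_sq_pos hz).le b
  have hN := zNorm_nonneg α f
  have hderiv := norm_deriv_le_zNorm hα1 hf hφz
  have hval := norm_le_zNorm hα1 hα2 hf hφz
  have hA : (1 - ‖z‖ ^ 2) ^ b * ‖coeffDeriv g φ z‖ ≤ M₂ * (1 - ‖φ z‖ ^ 2) ^ (α - 1) :=
    (div_le_iff₀ (Real.rpow_pos_of_pos hpos _)).1 (hM₂ z hz)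
  have hcancel : (1 - ‖φ z‖ ^ 2) ^ (1 - α) * (1 - ‖φ z‖ ^ 2) ^ (α - 1) = 1 := by
    rw [← Real.rpow_add hpos]
    norm_num
  rw [zygS_CphiUg hφ hφm hg hf.analyticOnNhd b hz]
  calc (1 - ‖z‖ ^ 2) ^ b * ‖deriv f (φ z) * coeffDeriv g φ z + f (φ z) * coeffVal g φ z‖
      ≤ ‖deriv f (φ z)‖ * ((1 - ‖z‖ ^ 2) ^ b * ‖coeffDeriv g φ z‖) +
          ‖f (φ z)‖ * ((1 - ‖z‖ ^ 2) ^ b * ‖coeffVal g φ z‖) := by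
        rw [mul_left_comm, mul_left_comm ‖f (φ z)‖, ← mul_add, ← norm_mul, ← norm_mul]
        exact mul_le_mul_of_nonneg_left (norm_add_le _ _) hρ
    _ ≤ 2 ^ (α - 1) * (α / (α - 1)) * zNorm α f * (1 - ‖φ z‖ ^ 2) ^ (1 - α) *
          (M₂ * (1 - ‖φ z‖ ^ 2) ^ (α - 1)) +
          (1 + α / ((α - 1) * (2 - α))) * zNorm α f * M₁ := by
        gcongr
        exact hM₁ z hz
    _ = _ := by
        rw [show ∀ x y q r s : ℝ, x * y * q * (s * r) = x * s * y * (q * r) by intros; ring,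
          hcancel]
        ring

lemma norm_CphiUg_zero_le {φ g f : ℂ → ℂ} (hφm : MapsTo φ uD uD) (hg : AnalyticOnNhd ℂ g uD)
    (hf : AnalyticOnNhd ℂ f uD) {Kf Kg : ℝ} (hKf : ∀ u ∈ uD, ‖f u‖ ≤ Kf)
    (hKg : ∀ u ∈ closedBall 0 ‖φ 0‖, ‖deriv g u‖ ≤ Kg) :
    ‖CphiUg g φ f 0‖ ≤ Kf * Kg * ‖φ 0‖ := by
  obtain ⟨F, hF, hT⟩ := exists_CphiUg_eq_sub hφm hg hf
  have hball : closedBall (0 : ℂ) ‖φ 0‖ ⊆ uD :=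
    closedBall_subset_ball (mem_uD.1 (hφm zero_mem_uD))
  have hbound : ∀ u ∈ closedBall (0 : ℂ) ‖φ 0‖, ‖f u * deriv g u‖ ≤ Kf * Kg := fun u hu => by
    rw [norm_mul]
    exact mul_le_mul (hKf u (hball hu)) (hKg u hu) (norm_nonneg _)
      ((norm_nonneg _).trans (hKf u (hball hu)))
  simpa [hT 0 zero_mem_uD] using
    (convex_closedBall (0 : ℂ) ‖φ 0‖).norm_image_sub_le_of_norm_hasDerivWithin_le
      (fun u hu => (hF u (hball hu)).hasDerivWithinAt) hbound
      (mem_closedBall_self (norm_nonneg _)) (by simp : φ 0 ∈ closedBall (0 : ℂ) ‖φ 0‖)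

lemma zNorm_CphiUg_le {α b M₁ M₂ : ℝ} (hα1 : 1 < α) (hα2 : α < 2) {φ g : ℂ → ℂ}
    (hφ : AnalyticOnNhd ℂ φ uD) (hφm : MapsTo φ uD uD) (hg : AnalyticOnNhd ℂ g uD)
    (hM₁ : ∀ z ∈ uD, (1 - ‖z‖ ^ 2) ^ b * ‖coeffVal g φ z‖ ≤ M₁)
    (hM₂ : ∀ z ∈ uD, (1 - ‖z‖ ^ 2) ^ b * ‖coeffDeriv g φ z‖ / (1 - ‖φ z‖ ^ 2) ^ (α - 1) ≤ M₂)
    {Kg : ℝ} (hKg : ∀ u ∈ closedBall 0 ‖φ 0‖, ‖deriv g u‖ ≤ Kg) {f : ℂ → ℂ} (hf : memZ α f) :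
    zNorm b (CphiUg g φ f) ≤
      ((1 + α / ((α - 1) * (2 - α))) * (Kg * ‖φ 0‖ + ‖deriv g (φ 0)‖ * ‖deriv φ 0‖ + M₁) +
        2 ^ (α - 1) * (α / (α - 1)) * M₂) * zNorm α f := by
  have hfa := hf.analyticOnNhd
  have hval := fun u (hu : u ∈ uD) => norm_le_zNorm hα1 hα2 hf hu
  have h0 := norm_CphiUg_zero_le hφm hg hfa hval hKg
  have h1 : ‖deriv (CphiUg g φ f) 0‖ ≤
      (1 + α / ((α - 1) * (2 - α))) * zNorm α f * (‖deriv g (φ 0)‖ * ‖deriv φ 0‖) := by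
    rw [(hasDerivAt_CphiUg hφ hφm hg hfa zero_mem_uD).deriv, norm_mul, norm_mul, mul_assoc]
    gcongr
    exact hval _ (hφm zero_mem_uD)
  have h2 : sSup (zygS b (CphiUg g φ f) '' uD) ≤
      (2 ^ (α - 1) * (α / (α - 1)) * M₂ + (1 + α / ((α - 1) * (2 - α))) * M₁) * zNorm α f :=
    csSup_le (nonempty_of_mem (mem_image_of_mem _ zero_mem_uD))
      (by rintro _ ⟨z, hz, rfl⟩; exact zygS_CphiUg_le hα1 hα2 hφ hφm hg hM₁ hM₂ hf hz)
  calc zNorm b (CphiUg g φ f)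
      = ‖CphiUg g φ f 0‖ + ‖deriv (CphiUg g φ f) 0‖ + sSup (zygS b (CphiUg g φ f) '' uD) := rfl
    _ ≤ _ := add_le_add (add_le_add h0 h1) h2
    _ = _ := by ring

lemma boundedOp_CphiUg {α b M₁ M₂ : ℝ} (hα1 : 1 < α) (hα2 : α < 2) {φ g : ℂ → ℂ}
    (hφ : AnalyticOnNhd ℂ φ uD) (hφm : MapsTo φ uD uD) (hg : AnalyticOnNhd ℂ g uD)
    (hM₁ : ∀ z ∈ uD, (1 - ‖z‖ ^ 2) ^ b * ‖coeffVal g φ z‖ ≤ M₁)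
    (hM₂ : ∀ z ∈ uD, (1 - ‖z‖ ^ 2) ^ b * ‖coeffDeriv g φ z‖ / (1 - ‖φ z‖ ^ 2) ^ (α - 1) ≤ M₂) :
    boundedOp α b (CphiUg g φ) := by
  obtain ⟨Kg, hKg⟩ := (isCompact_closedBall (0 : ℂ) ‖φ 0‖).exists_bound_of_continuousOn
    (hg.deriv.continuousOn.mono (closedBall_subset_ball (mem_uD.1 (hφm zero_mem_uD))))
  refine ⟨fun f hf => ⟨(analyticOnNhd_CphiUg hφ hφm hg
      hf.analyticOnNhd).analyticOn, _,
      fun z hz => zygS_CphiUg_le hα1 hα2 hφ hφm hg hM₁ hM₂ hf hz⟩,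
    _, lt_max_of_lt_right one_pos, fun f hf =>
      (zNorm_CphiUg_le hα1 hα2 hφ hφm hg hM₁ hM₂ hKg hf).trans
        (mul_le_mul_of_nonneg_right (le_max_left _ 1) (zNorm_nonneg α f))⟩

theorem stmt_8_general (α β : ℝ) (hα1 : 1 < α) (hα2 : α < 2)
    (φ g : ℂ → ℂ) (hφ : AnalyticOn ℂ φ uD) (hφm : Set.MapsTo φ uD uD)
    (hg : AnalyticOn ℂ g uD) :
    boundedOp α β (CphiUg g φ) ↔
      (memHv β (fun z => deriv g (φ z) * deriv (deriv φ) z + deriv (deriv g) (φ z) * (deriv φ z) ^ 2) ∧ (∃ M : ℝ, ∀ z ∈ uD, (1 - ‖z‖ ^ 2) ^ β * ‖deriv g (φ z) * (deriv φ z) ^ 2‖ / (1 - ‖φ z‖ ^ 2) ^ (α - 1) ≤ M)) := by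
  rw [isOpen_uD.analyticOn_iff_analyticOnNhd] at hφ hg
  constructor
  · intro hT
    exact ⟨exists_weighted_norm_coeffVal_le hφ hφm hg hT.1,
      exists_weighted_norm_coeffDeriv_div_le hα1 hα2 hφ hφm hg hT⟩
  · rintro ⟨⟨M₁, hM₁⟩, M₂, hM₂⟩
    exact boundedOp_CphiUg hα1 hα2 hφ hφm hg hM₁ hM₂

theorem stmt_8 (α β : ℝ) (hα1 : 1 < α) (hα2 : α < 2) (hβ : 0 < β)
    (φ g : ℂ → ℂ) (hφ : AnalyticOn ℂ φ uD) (hφm : Set.MapsTo φ uD uD)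
    (hg : AnalyticOn ℂ g uD) :
    boundedOp α β (CphiUg g φ) ↔
      (memHv β (fun z => deriv g (φ z) * deriv (deriv φ) z + deriv (deriv g) (φ z) * (deriv φ z) ^ 2) ∧ (∃ M : ℝ, ∀ z ∈ uD, (1 - ‖z‖ ^ 2) ^ β * ‖deriv g (φ z) * (deriv φ z) ^ 2‖ / (1 - ‖φ z‖ ^ 2) ^ (α - 1) ≤ M)) :=
  stmt_8_general α β hα1 hα2 φ g hφ hφm hg
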